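/- arXiv:1408.5708 — 2 statements merged into one kernel-verified Lean document; each statement's English description precedes it below -/
import Mathlib

section
/- Fix an integer d ≥ 1 and a partition λ = (λ₁,…,λ_{d−1}) with at most d−1 parts. For each k with dk − |λ| ≥ λ₁, let λ'(k) = (dk − |λ|, λ₁, …, λ_{d−1}), a partition of dk with at most d parts, and let m(k) = [Δ(x) · h_d(all monomials of degree k in x₁,…,x_d)]_{(λ'(k)_j + d − j)_{j=1}^{d}}, the multiplicity of S^{λ'(k)} in S^d(S^k). Then m(k) is eventually constant: there exist K and c such that m(k) = c for all k ≥ K. -/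
open MvPolynomial Finset

noncomputable section

/-- Complete homogeneous symmetric polynomial `h_d` evaluated at the family `y i`, `i ∈ s`:
the sum, over all multisets of size `d` with elements in `s`, of the corresponding products. -/
def hSum {ι : Type*} [DecidableEq ι] {R : Type*} [CommRing R]
    (d : ℕ) (s : Finset ι) (y : ι → R) : R :=
  ∑ t ∈ s.sym d, ((t : Multiset ι).map y).prod

/-- Elementary symmetric polynomial `e_d` evaluated at the family `y i`, `i ∈ s`. -/
def eSum {ι : Type*} [DecidableEq ι] {R : Type*} [CommRing R]
    (d : ℕ) (s : Finset ι) (y : ι → R) : R :=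
  ∑ t ∈ s.powersetCard d, ∏ i ∈ t, y i

/-- The monomial `x^c` in `m` variables. -/
def monom (m : ℕ) (c : Fin m → ℕ) : MvPolynomial (Fin m) ℤ := ∏ j, X j ^ c j

/-- `h_d` applied to the list of all monomials of degree `k` in `m` variables:
the character of `S^d(S^k W)` for `dim W = m`. -/
def charS (d k m : ℕ) : MvPolynomial (Fin m) ℤ :=
  hSum d (Finset.Nat.antidiagonalTuple m k) (monom m)

/-- `e_d` applied to the list of all monomials of degree `k` in `m` variables:
the character of `Λ^d(S^k W)` for `dim W = m`. -/
def charW (d k m : ℕ) : MvPolynomial (Fin m) ℤ :=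
  eSum d (Finset.Nat.antidiagonalTuple m k) (monom m)

/-- `h_k(x_1,…,x_m)`. -/
def hpoly (m k : ℕ) : MvPolynomial (Fin m) ℤ :=
  ∑ c ∈ Finset.Nat.antidiagonalTuple m k, monom m c

/-- `h_k(x_1^r,…,x_m^r)`. -/
def hkPow (m k r : ℕ) : MvPolynomial (Fin m) ℤ :=
  ∑ c ∈ Finset.Nat.antidiagonalTuple m k, ∏ j, X j ^ (r * c j)

/-- The Vandermonde product `Δ(x) = ∏_{i<j} (x_i - x_j)`. -/
def vand (m : ℕ) : MvPolynomial (Fin m) ℤ :=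
  ∏ p ∈ (Finset.univ : Finset (Fin m × Fin m)).filter (fun p => p.1 < p.2),
    (X p.1 - X p.2)

/-- The coefficient of the monomial with exponent vector `e`. -/
def coeffOf {m : ℕ} (e : Fin m → ℕ) (P : MvPolynomial (Fin m) ℤ) : ℤ :=
  MvPolynomial.coeff (Finsupp.equivFunOnFinite.symm e) P

/-- `N_α(k; μ)`: the number of `(α,μ)`-matrices, i.e. of nonnegative integral `a × m`
matrices all of whose row sums are `k` and whose `α`-weighted column sums are `μ`. -/
def Nmat {a m : ℕ} (α : Fin a → ℕ) (k : ℕ) (μ : Fin m → ℤ) : ℕ :=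
  Set.ncard {M : Fin a → Fin m → ℕ |
    (∀ i, ∑ j, M i j = k) ∧ ∀ j, ∑ i, (α i : ℤ) * (M i j : ℤ) = μ j}

/-- `N_α(k; μ)` for `α` given as a list. -/
def NmatL (αs : List ℕ) {m : ℕ} (k : ℕ) (μ : Fin m → ℤ) : ℕ :=
  Nmat (fun i : Fin αs.length => αs.get i) k μ

/-- `D_ρ`: the number of permutations in `S_d` of cycle type `ρ` (a partition of `d`);
Mathlib's `cycleType` records only the cycles of length at least 2. -/
def Dnum (d : ℕ) (ρ : Nat.Partition d) : ℕ :=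
  ((Finset.univ : Finset (Equiv.Perm (Fin d))).filter
    (fun σ => σ.cycleType = ρ.parts.filter (fun r => 2 ≤ r))).card

/-! Monomials of degree `k + 1` divisible by `x_i` are exactly `x_i` times the monomials of
degree `k`, so `x_i ^ D * charS D k m` is the part of `charS D (k + 1) m` coming from multisets of
such monomials. Every remaining term contains a monomial of degree `k + 1` in the variables other
than `x_i`, so the two polynomials agree at all exponents of degree at most `k` outside `x_i`.
These exponents form a lower set, so the agreement survives multiplication by any polynomial, in
particular by the Vandermonde product. The exponent `λ'(k) + δ` has constant degree outside the
first variable and gains `d` in it when `k` increases, whence the multiplicity is constant once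
`k` exceeds that degree and `d * k ≥ |λ|`. -/

section hSum

variable {ι κ R : Type*} [DecidableEq ι] [DecidableEq κ] [CommRing R]

lemma hSum_mul_left (D : ℕ) (s : Finset ι) (a : R) (y : ι → R) :
    hSum D s (fun i => a * y i) = a ^ D * hSum D s y := by
  simp only [hSum, mul_sum, Multiset.prod_map_mul, Multiset.map_const', Multiset.prod_replicate,
    Sym.card_coe]

lemma hSum_map (D : ℕ) (s : Finset ι) (f : ι ↪ κ) (y : κ → R) :
    hSum D (s.map f) y = hSum D s (y ∘ f) := by
  simp [hSum, sym_map, Multiset.map_map]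

end hSum

lemma monom_add (m : ℕ) (c c' : Fin m → ℕ) : monom m (c + c') = monom m c * monom m c' := by
  simp only [monom, Pi.add_apply, pow_add, prod_mul_distrib]

lemma monom_single_one {m : ℕ} (i : Fin m) : monom m (Pi.single i 1) = X i := by
  simp [monom, Pi.single_apply]

lemma multiset_prod_map_monom (m : ℕ) (T : Multiset (Fin m → ℕ)) :
    (T.map (monom m)).prod = monom m T.sum := by
  induction T using Multiset.induction_on with
  | empty => simp [monom]
  | cons c T ih => simp [ih, monom_add]

lemma monom_eq_monomial (m : ℕ) (c : Fin m → ℕ) :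
    monom m c = monomial (Finsupp.equivFunOnFinite.symm c) 1 := by
  simp [monom, monomial_eq, Finsupp.prod_fintype]

lemma coeff_mul_eq_of_isLowerSet {σ R : Type*} [CommSemiring R] {S : Set (σ →₀ ℕ)}
    (hS : IsLowerSet S) {F G : MvPolynomial σ R} (h : ∀ b ∈ S, coeff b F = coeff b G)
    (P : MvPolynomial σ R) {ν : σ →₀ ℕ} (hν : ν ∈ S) :
    coeff ν (P * F) = coeff ν (P * G) := by
  classical
  simp only [coeff_mul]
  refine sum_congr rfl fun x hx => ?_
  rw [h x.2 (hS (by rw [← mem_antidiagonal.mp hx]; exact le_add_self) hν)]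

lemma mem_map_addLeftEmbedding_of_sum_erase_le {m k : ℕ} (i : Fin m) {c : Fin m → ℕ}
    (hc : c ∈ Nat.antidiagonalTuple m (k + 1)) (h : ∑ j ∈ univ.erase i, c j ≤ k) :
    c ∈ (Nat.antidiagonalTuple m k).map (addLeftEmbedding (Pi.single i 1)) := by
  rw [Nat.mem_antidiagonalTuple, ← add_sum_erase _ _ (mem_univ i)] at hc
  refine mem_map.mpr ⟨Function.update c i (c i - 1), ?_, ?_⟩
  · rw [Nat.mem_antidiagonalTuple, sum_update_of_mem (mem_univ i), sdiff_singleton_eq_erase]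
    omega
  · funext j
    rcases eq_or_ne j i with rfl | hj
    · simp only [addLeftEmbedding_apply, Pi.add_apply, Pi.single_eq_same, Function.update_self]
      omega
    · simp [hj]

lemma coeff_charS_succ {D k m : ℕ} (i : Fin m) {ν : Fin m →₀ ℕ}
    (hν : ∑ j ∈ univ.erase i, ν j ≤ k) :
    coeff ν (charS D (k + 1) m) = coeff ν (X i ^ D * charS D k m) := by
  set A := (Nat.antidiagonalTuple m k).map (addLeftEmbedding (Pi.single i 1))
  have hA : A ⊆ Nat.antidiagonalTuple m (k + 1) := by
    intro c' hc'
    obtain ⟨c, hc, rfl⟩ := mem_map.mp hc'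
    rw [Nat.mem_antidiagonalTuple] at hc ⊢
    simp [sum_add_distrib, hc, add_comm]
  have hX : X i ^ D * charS D k m = hSum D A (monom m) := by
    rw [hSum_map, charS, ← hSum_mul_left]
    congr 1
    funext c
    simp [monom_add, monom_single_one]
  have hrest : ∀ t ∈ (Nat.antidiagonalTuple m (k + 1)).sym D \ A.sym D,
      coeff ν (((t : Multiset (Fin m → ℕ)).map (monom m)).prod) = 0 := by
    intro t ht
    obtain ⟨ht, htA⟩ := mem_sdiff.mp ht
    obtain ⟨c, hct, hcA⟩ : ∃ c ∈ t, c ∉ A := by simpa [mem_sym_iff] using htA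
    have hc : k < ∑ j ∈ univ.erase i, c j := by
      by_contra! hle
      exact hcA (mem_map_addLeftEmbedding_of_sum_erase_le i (mem_sym_iff.mp ht c hct) hle)
    have hle : ∀ j, c j ≤ (t : Multiset (Fin m → ℕ)).sum j := fun j => by
      rw [Pi.multiset_sum_apply]
      exact Multiset.le_sum_of_mem (Multiset.mem_map_of_mem (fun f => f j) hct)
    rw [multiset_prod_map_monom, monom_eq_monomial, coeff_monomial, if_neg]
    rintro rfl
    exact absurd (hν.trans_lt hc) (not_lt.mpr (sum_le_sum fun j _ => hle j))
  rw [hX, charS, hSum, hSum, ← sum_sdiff (sym_mono hA D), coeff_add, coeff_sum,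
    sum_eq_zero hrest, zero_add]

lemma coeff_mul_charS_succ {D k m : ℕ} (P : MvPolynomial (Fin m) ℤ) (i : Fin m)
    {ν : Fin m →₀ ℕ} (hν : ∑ j ∈ univ.erase i, ν j ≤ k) :
    coeff (ν + Finsupp.single i D) (P * charS D (k + 1) m) = coeff ν (P * charS D k m) := by
  have hS : IsLowerSet {b : Fin m →₀ ℕ | ∑ j ∈ univ.erase i, b j ≤ k} :=
    fun _ _ hba ha => (sum_le_sum fun j _ => hba j).trans ha
  have hmem : ∑ j ∈ univ.erase i, (ν + Finsupp.single i D) j ≤ k := by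
    rwa [sum_congr rfl fun j hj => by
      rw [Finsupp.add_apply, Finsupp.single_eq_of_ne (ne_of_mem_erase hj), add_zero]]
  rw [coeff_mul_eq_of_isLowerSet hS (fun b hb => coeff_charS_succ i hb) P hmem, mul_left_comm,
    X_pow_eq_monomial, add_comm, coeff_monomial_mul, one_mul]

/-- `λ'(k) + δ` with `λ'(k) = (d * k - |λ|, λ₁, …, λ_{d-1})`, `δ = (d - 1, …, 1, 0)`. -/
def paddedExponent (d : ℕ) (lam : ℕ → ℕ) (k : ℕ) : Fin d →₀ ℕ :=
  Finsupp.equivFunOnFinite.symm fun j : Fin d =>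
    (if (j : ℕ) = 0 then d * k - ∑ i ∈ Finset.range (d - 1), lam i else lam ((j : ℕ) - 1))
      + (d - 1 - (j : ℕ))

lemma paddedExponent_succ {d : ℕ} (hd : 1 ≤ d) (lam : ℕ → ℕ) {k : ℕ}
    (hk : ∑ i ∈ Finset.range (d - 1), lam i ≤ d * k) :
    paddedExponent d lam (k + 1) = paddedExponent d lam k + Finsupp.single ⟨0, hd⟩ d := by
  ext j
  rcases eq_or_ne j ⟨0, hd⟩ with rfl | hj
  · simp only [paddedExponent, Finsupp.equivFunOnFinite_symm_apply_apply, Finsupp.coe_add,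
      Pi.add_apply, Finsupp.single_eq_same, ↓reduceIte, tsub_zero, Nat.mul_succ]
    omega
  · have hj' : (j : ℕ) ≠ 0 := fun h => hj (Fin.ext h)
    simp [paddedExponent, hj', Finsupp.single_eq_of_ne hj]

lemma sum_erase_paddedExponent {d : ℕ} (hd : 1 ≤ d) (lam : ℕ → ℕ) (k : ℕ) :
    ∑ j ∈ univ.erase ⟨0, hd⟩, paddedExponent d lam k j =
      ∑ j ∈ univ.erase ⟨0, hd⟩, paddedExponent d lam 0 j :=
  sum_congr rfl fun j hj => by
    have hj' : (j : ℕ) ≠ 0 := fun h => ne_of_mem_erase hj (Fin.ext h)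
    simp [paddedExponent, hj']

theorem stable_multiplicity_general (d : ℕ) (hd : 1 ≤ d)
    (lam : ℕ → ℕ) :
    ∃ K : ℕ, ∃ c : ℤ, ∀ k : ℕ, K ≤ k →
      coeffOf (fun j : Fin d =>
          (if (j : ℕ) = 0 then d * k - ∑ i ∈ Finset.range (d - 1), lam i
            else lam ((j : ℕ) - 1)) + (d - 1 - (j : ℕ)))
        (vand d * charS d k d) = c := by
  set K :=
    ∑ i ∈ Finset.range (d - 1), lam i + ∑ j ∈ univ.erase ⟨0, hd⟩, paddedExponent d lam 0 j
  refine ⟨K, coeff (paddedExponent d lam K) (vand d * charS d K d), fun k hk => ?_⟩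
  change coeff (paddedExponent d lam k) _ = _
  induction k, hk using Nat.le_induction with
  | base => rfl
  | succ k hk ih =>
    have hlam := (Nat.le_add_right _ _).trans (hk.trans (Nat.le_mul_of_pos_left k hd))
    have htail := (sum_erase_paddedExponent hd lam k).trans_le ((Nat.le_add_left _ _).trans hk)
    rw [← ih, paddedExponent_succ hd lam hlam, coeff_mul_charS_succ _ _ htail]

/-- Stability: for fixed `d` and a partition `λ` with at most `d−1` parts, the
multiplicity of `S^{λ'(k)}` in `S^d(S^k)`, where `λ'(k)` is obtained from `λ` by adding a
new first row filling up to weight `dk`, is eventually constant in `k`. -/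
theorem stable_multiplicity (d : ℕ) (hd : 1 ≤ d)
    (lam : ℕ → ℕ) (hanti : ∀ i j : ℕ, i ≤ j → lam j ≤ lam i)
    (hsupp : ∀ i : ℕ, d - 1 ≤ i → lam i = 0) :
    ∃ K : ℕ, ∃ c : ℤ, ∀ k : ℕ, K ≤ k →
      coeffOf (fun j : Fin d =>
          (if (j : ℕ) = 0 then d * k - ∑ i ∈ Finset.range (d - 1), lam i
            else lam ((j : ℕ) - 1)) + (d - 1 - (j : ℕ)))
        (vand d * charS d k d) = c :=
  stable_multiplicity_general d hd lam
end
end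

section
/- Let d ≥ 1 and k ≥ 1 be integers, let n ≥ dk, and let λ be a partition of dk with λ₁ = d (exactly d columns); let λ' = (λ₂, λ₃, …) be λ with its first row removed, and pad λ and λ' with zeros to length n. For r ≥ 0 let E_r be the list of all squarefree monomials of degree r in x₁,…,x_n (products of r distinct variables). Then [Δ(x) · e_d(E_k)]_{(λ_j + n − j)_{j=1}^{n}} = [Δ(x) · e_d(E_{k−1})]_{(λ'_j + n − j)_{j=1}^{n}}; that is, the multiplicity of S^λ in Λ^d(Λ^k W) equals the multiplicity of S^{λ'} in Λ^d(Λ^{k−1} W). -/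
open MvPolynomial Finset

noncomputable section

/-- `e_d` applied to the list of all squarefree monomials of degree `r` in `n` variables:
the character of `Λ^d(Λ^r W)` for `dim W = n`. -/
def charEE (n d r : ℕ) : MvPolynomial (Fin n) ℤ :=
  eSum d (Finset.powersetCard r (Finset.univ : Finset (Fin n)))
    (fun S => ∏ i ∈ S, X i)

/-!
Write `Δ(x) = ∑_ρ ± ∏_j x_j ^ ρ(j)` over the permutations `ρ` of `{0, …, n - 1}` and `e_d(E_r)` as a
sum over the `d`-families `A` of `r`-sets; then the coefficient of `x^e` in `Δ(x) · e_d(E_r)` is a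
signed count of the pairs `(ρ, A)` with `ρ(j) + #{S ∈ A | j ∈ S} = e_j` for all `j`.
For `e = λ + δ` the exponent `d + n - 1` at `j = 0` is the largest possible, so `ρ(0) = n - 1` and
every `S ∈ A` contains `0`; for `e = λ' + δ` the exponent `0` at `j = n - 1` forces `ρ(n - 1) = 0`
and no `S ∈ A` contains `n - 1`. Deleting `0` from every set and relabelling `j ↦ j - 1`
cyclically, while replacing `ρ` by `c ρ c` for the rotation `c : j ↦ j + 1`, matches the two kinds
of pairs bijectively and preserves signs.
-/

open Equiv

def permExponent {m : ℕ} (ρ : Perm (Fin m)) : Fin m →₀ ℕ :=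
  Finsupp.equivFunOnFinite.symm fun j => ρ j

lemma prod_X_pow_eq_monomial_equivFunOnFinite {σ R : Type*} [Fintype σ] [CommSemiring R]
    (c : σ → ℕ) :
    ∏ j, (X j : MvPolynomial σ R) ^ c j = monomial (Finsupp.equivFunOnFinite.symm c) 1 := by
  rw [monomial_eq, C_1, one_mul, Finsupp.prod_fintype _ _ (fun _ => pow_zero _)]
  rfl

lemma vand_eq_det_vandermonde (m : ℕ) :
    vand m = (Matrix.vandermonde fun i => (X (Fin.rev i) : MvPolynomial (Fin m) ℤ)).det := by
  rw [Matrix.det_vandermonde, vand, prod_sigma']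
  refine prod_nbij' (fun p => ⟨Fin.rev p.2, Fin.rev p.1⟩)
    (fun p => (Fin.rev p.2, Fin.rev p.1)) ?_ ?_ ?_ ?_ ?_ <;> simp [Fin.rev_lt_rev]

lemma vand_eq_sum_monomial (m : ℕ) :
    vand m = ∑ ρ : Perm (Fin m),
      monomial (permExponent ρ) ((Perm.sign (Fin.revPerm * ρ) : ℤˣ) : ℤ) := by
  rw [vand_eq_det_vandermonde, Matrix.det_apply]
  refine Fintype.sum_bijective (fun σ => σ⁻¹ * Fin.revPerm)
    ((Group.mulRight_bijective _).comp (Equiv.inv (Perm (Fin m))).bijective) _ _ fun σ => ?_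
  have hsign : Perm.sign (Fin.revPerm * (σ⁻¹ * Fin.revPerm)) = Perm.sign σ := by
    simp only [map_mul, map_inv, Int.units_inv_eq_self]
    rw [mul_comm, mul_assoc, Int.units_mul_self, mul_one]
  have hprod :
      ∏ i, Matrix.vandermonde (fun i => (X (Fin.rev i) : MvPolynomial (Fin m) ℤ)) (σ i) i
      = monomial (permExponent (σ⁻¹ * Fin.revPerm)) 1 := by
    rw [permExponent, ← prod_X_pow_eq_monomial_equivFunOnFinite,
      ← Equiv.prod_comp (σ⁻¹ * Fin.revPerm)]
    simp [Matrix.vandermonde_apply, Perm.mul_apply]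
  rw [hprod, hsign, Units.smul_def, smul_monomial, smul_eq_mul, mul_one]

lemma coeff_sum_monomial_mul_sum_monomial {σ ι κ R : Type*} [DecidableEq σ] [CommSemiring R]
    (s : Finset ι) (t : Finset κ) (a : ι → σ →₀ ℕ) (b : κ → σ →₀ ℕ) (c : ι → R)
    (e : σ →₀ ℕ) :
    coeff e ((∑ i ∈ s, monomial (a i) (c i)) * ∑ j ∈ t, monomial (b j) 1)
      = ∑ p ∈ (s ×ˢ t).filter (fun p => a p.1 + b p.2 = e), c p.1 := by
  simp only [sum_mul_sum, coeff_sum, monomial_mul, mul_one, coeff_monomial]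
  rw [sum_filter, sum_product]

def memberCount {α : Type*} [DecidableEq α] (A : Finset (Finset α)) (j : α) : ℕ :=
  #(A.filter (j ∈ ·))

lemma memberCount_le_card {α : Type*} [DecidableEq α] (A : Finset (Finset α)) (j : α) :
    memberCount A j ≤ #A :=
  card_filter_le _ _

lemma prod_prod_X_eq_monomial {σ R : Type*} [Fintype σ] [DecidableEq σ] [CommSemiring R]
    (A : Finset (Finset σ)) :
    ∏ S ∈ A, ∏ i ∈ S, (X i : MvPolynomial σ R)
      = monomial (Finsupp.equivFunOnFinite.symm (memberCount A)) 1 := by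
  rw [← prod_X_pow_eq_monomial_equivFunOnFinite]
  calc ∏ S ∈ A, ∏ i ∈ S, (X i : MvPolynomial σ R)
      = ∏ S ∈ A, ∏ j, X j ^ (if j ∈ S then 1 else 0) := by
        refine prod_congr rfl fun S _ => ?_
        simp [pow_ite, prod_ite_mem]
    _ = ∏ j, X j ^ memberCount A j := by
        rw [prod_comm]
        simp only [prod_pow_eq_pow_sum, memberCount, card_filter]

lemma charEE_eq_sum_monomial (n d r : ℕ) :
    charEE n d r = ∑ A ∈ (powersetCard r univ).powersetCard d,
      monomial (Finsupp.equivFunOnFinite.symm (memberCount A)) 1 := by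
  simp only [charEE, eSum, prod_prod_X_eq_monomial]

def coeffPairs (n d r : ℕ) (e : Fin n → ℕ) :
    Finset (Perm (Fin n) × Finset (Finset (Fin n))) :=
  (univ ×ˢ (powersetCard r univ).powersetCard d).filter
    fun p => ∀ j, (p.1 j : ℕ) + memberCount p.2 j = e j

lemma coeffOf_vand_mul_charEE (n d r : ℕ) (e : Fin n → ℕ) :
    coeffOf e (vand n * charEE n d r)
      = ∑ p ∈ coeffPairs n d r e, ((Perm.sign (Fin.revPerm * p.1) : ℤˣ) : ℤ) := by
  rw [coeffOf, vand_eq_sum_monomial, charEE_eq_sum_monomial,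
    coeff_sum_monomial_mul_sum_monomial, coeffPairs]
  refine sum_congr (filter_congr fun p _ => ?_) fun _ _ => rfl
  simp [Finsupp.ext_iff, permExponent]

lemma memberCount_image {α β : Type*} [DecidableEq α] [DecidableEq β] {A : Finset (Finset α)}
    {f : Finset α → Finset β} (hf : Set.InjOn f A) {i : α} {j : β}
    (h : ∀ S ∈ A, j ∈ f S ↔ i ∈ S) :
    memberCount (A.image f) j = memberCount A i := by
  rw [memberCount, filter_image, card_image_of_injOn (hf.mono (filter_subset _ _)), memberCount,
    filter_congr h]

lemma image_mem_powersetCard_powersetCard {α β : Type*} [DecidableEq β] [Fintype β]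
    {A : Finset (Finset α)} {f : Finset α → Finset β} (hf : Set.InjOn f A) {d r : ℕ}
    (hA : #A = d) (hcard : ∀ S ∈ A, #(f S) = r) :
    A.image f ∈ (powersetCard r univ).powersetCard d := by
  refine mem_powersetCard.mpr ⟨fun T hT => ?_, by rw [card_image_of_injOn hf, hA]⟩
  obtain ⟨S, hS, rfl⟩ := mem_image.mp hT
  exact mem_powersetCard.mpr ⟨subset_univ _, hcard S hS⟩

section Rotation

variable {m : ℕ}

def shiftDown (S : Finset (Fin (m + 1))) : Finset (Fin (m + 1)) :=
  (S.erase 0).map (finRotate (m + 1)).symm.toEmbedding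

def shiftUp (T : Finset (Fin (m + 1))) : Finset (Fin (m + 1)) :=
  insert 0 (T.map (finRotate (m + 1)).toEmbedding)

lemma finRotate_eq_zero_iff {j : Fin (m + 1)} : finRotate (m + 1) j = 0 ↔ j = Fin.last m := by
  rw [← finRotate_last, (finRotate _).injective.eq_iff]

lemma finRotate_symm_zero : (finRotate (m + 1)).symm 0 = Fin.last m :=
  (finRotate _).symm_apply_eq.mpr finRotate_last.symm

lemma mem_shiftDown {S : Finset (Fin (m + 1))} {j : Fin (m + 1)} :
    j ∈ shiftDown S ↔ j ≠ Fin.last m ∧ finRotate (m + 1) j ∈ S := by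
  simp only [shiftDown, mem_map_equiv, Equiv.symm_symm, mem_erase, ne_eq, finRotate_eq_zero_iff]

lemma mem_shiftUp {T : Finset (Fin (m + 1))} {j : Fin (m + 1)} :
    j ∈ shiftUp T ↔ j = 0 ∨ (finRotate (m + 1)).symm j ∈ T := by
  simp only [shiftUp, mem_insert, mem_map_equiv]

lemma shiftUp_shiftDown {S : Finset (Fin (m + 1))} (h : 0 ∈ S) : shiftUp (shiftDown S) = S := by
  ext j
  by_cases hj : j = 0
  · simp [mem_shiftUp, hj, h]
  · simp only [mem_shiftUp, mem_shiftDown, hj, Equiv.symm_apply_eq, finRotate_last,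
      Equiv.apply_symm_apply, ne_eq, not_false_eq_true, true_and, false_or]

lemma shiftDown_shiftUp {T : Finset (Fin (m + 1))} (h : Fin.last m ∉ T) :
    shiftDown (shiftUp T) = T := by
  ext j
  by_cases hj : j = Fin.last m
  · simp [mem_shiftDown, hj, h]
  · simp only [mem_shiftDown, mem_shiftUp, hj, finRotate_eq_zero_iff, Equiv.symm_apply_apply,
      ne_eq, not_false_eq_true, true_and, false_or]

lemma card_shiftDown {S : Finset (Fin (m + 1))} (h : 0 ∈ S) : #(shiftDown S) + 1 = #S := by
  rw [shiftDown, card_map, card_erase_add_one h]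

lemma card_shiftUp {T : Finset (Fin (m + 1))} (h : Fin.last m ∉ T) : #(shiftUp T) = #T + 1 := by
  rw [shiftUp, card_insert_of_notMem, card_map]
  rwa [mem_map_equiv, finRotate_symm_zero]

variable {d r : ℕ} {e : Fin (m + 1) → ℕ}
  {p q : Perm (Fin (m + 1)) × Finset (Finset (Fin (m + 1)))}

lemma eq_last_and_zero_mem_of_mem_coeffPairs (h0 : e 0 = m + d)
    (hp : p ∈ coeffPairs (m + 1) d r e) :
    p.1 0 = Fin.last m ∧ ∀ S ∈ p.2, 0 ∈ S := by
  obtain ⟨hmem, hcond⟩ := mem_filter.mp hp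
  have hcard : #p.2 = d := (mem_powersetCard.mp (mem_product.mp hmem).2).2
  have hle := memberCount_le_card p.2 0
  have hlt := (p.1 0).isLt
  have h := hcond 0
  refine ⟨Fin.ext (by rw [Fin.val_last]; omega), card_filter_eq_iff.mp ?_⟩
  rw [← memberCount]
  omega

lemma eq_zero_and_last_notMem_of_mem_coeffPairs (hlast : e (Fin.last m) = 0)
    (hq : q ∈ coeffPairs (m + 1) d r e) :
    q.1 (Fin.last m) = 0 ∧ ∀ T ∈ q.2, Fin.last m ∉ T := by
  have h := (mem_filter.mp hq).2 (Fin.last m)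
  rw [hlast, Nat.add_eq_zero_iff] at h
  exact ⟨Fin.ext h.1, card_filter_eq_zero_iff.mp h.2⟩

def rotDown (p : Perm (Fin (m + 1)) × Finset (Finset (Fin (m + 1)))) :
    Perm (Fin (m + 1)) × Finset (Finset (Fin (m + 1))) :=
  (finRotate _ * p.1 * finRotate _, p.2.image shiftDown)

def rotUp (q : Perm (Fin (m + 1)) × Finset (Finset (Fin (m + 1)))) :
    Perm (Fin (m + 1)) × Finset (Finset (Fin (m + 1))) :=
  ((finRotate _)⁻¹ * q.1 * (finRotate _)⁻¹, q.2.image shiftUp)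

lemma injOn_shiftDown {A : Finset (Finset (Fin (m + 1)))} (h : ∀ S ∈ A, 0 ∈ S) :
    Set.InjOn shiftDown (A : Set (Finset (Fin (m + 1)))) := fun S hS S' hS' hSS' => by
  rw [← shiftUp_shiftDown (h S hS), hSS', shiftUp_shiftDown (h S' hS')]

lemma injOn_shiftUp {A : Finset (Finset (Fin (m + 1)))} (h : ∀ T ∈ A, Fin.last m ∉ T) :
    Set.InjOn shiftUp (A : Set (Finset (Fin (m + 1)))) := fun T hT T' hT' hTT' => by
  rw [← shiftDown_shiftUp (h T hT), hTT', shiftDown_shiftUp (h T' hT')]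

variable {e' : Fin (m + 1) → ℕ}

lemma rotDown_mem_coeffPairs (h0 : e 0 = m + d) (hlast : e' (Fin.last m) = 0)
    (hshift : ∀ j ≠ Fin.last m, e' j = e (finRotate _ j) + 1)
    (hp : p ∈ coeffPairs (m + 1) d (r + 1) e) :
    rotDown p ∈ coeffPairs (m + 1) d r e' := by
  obtain ⟨hρ0, hzero⟩ := eq_last_and_zero_mem_of_mem_coeffPairs h0 hp
  obtain ⟨hmem, hcond⟩ := mem_filter.mp hp
  obtain ⟨hsub, hcard⟩ := mem_powersetCard.mp (mem_product.mp hmem).2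
  have hinj := injOn_shiftDown hzero
  refine mem_filter.mpr ⟨mem_product.mpr ⟨mem_univ _,
    image_mem_powersetCard_powersetCard hinj hcard fun S hS => ?_⟩, fun j => ?_⟩
  · have := card_shiftDown (hzero S hS)
    have := (mem_powersetCard.mp (hsub hS)).2
    omega
  by_cases hj : j = Fin.last m
  · subst hj
    have hperm : (rotDown p).1 (Fin.last m) = 0 := by
      simp only [rotDown, Perm.mul_apply, finRotate_last, hρ0]
    have hcount : memberCount (rotDown p).2 (Fin.last m) = 0 :=
      card_filter_eq_zero_iff.mpr fun T hT => by
        obtain ⟨S, -, rfl⟩ := mem_image.mp hT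
        simp [mem_shiftDown]
    rw [hperm, hcount, hlast, Fin.val_zero]
  · have hρ : p.1 (finRotate _ j) ≠ Fin.last m := fun h =>
      hj (finRotate_eq_zero_iff.mp (p.1.injective (h.trans hρ0.symm)))
    have hperm : ((rotDown p).1 j : ℕ) = p.1 (finRotate _ j) + 1 :=
      coe_finRotate_of_ne_last hρ
    have hcount : memberCount (rotDown p).2 j = memberCount p.2 (finRotate _ j) :=
      memberCount_image hinj fun S _ => by
        simp only [mem_shiftDown, ne_eq, hj, not_false_eq_true, true_and]
    have := hcond (finRotate _ j)
    have := hshift j hj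
    rw [hperm, hcount]
    omega

lemma rotUp_mem_coeffPairs (h0 : e 0 = m + d) (hlast : e' (Fin.last m) = 0)
    (hshift : ∀ j ≠ Fin.last m, e' j = e (finRotate _ j) + 1)
    (hq : q ∈ coeffPairs (m + 1) d r e') :
    rotUp q ∈ coeffPairs (m + 1) d (r + 1) e := by
  obtain ⟨hρ, hnotMem⟩ := eq_zero_and_last_notMem_of_mem_coeffPairs hlast hq
  obtain ⟨hmem, hcond⟩ := mem_filter.mp hq
  obtain ⟨hsub, hcard⟩ := mem_powersetCard.mp (mem_product.mp hmem).2
  have hinj := injOn_shiftUp hnotMem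
  refine mem_filter.mpr ⟨mem_product.mpr ⟨mem_univ _,
    image_mem_powersetCard_powersetCard hinj hcard fun T hT => ?_⟩, fun j => ?_⟩
  · rw [card_shiftUp (hnotMem T hT), (mem_powersetCard.mp (hsub hT)).2]
  by_cases hj : j = 0
  · subst hj
    have hperm : (rotUp q).1 0 = Fin.last m := by
      simp only [rotUp, Perm.mul_apply, Perm.inv_def, finRotate_symm_zero, hρ]
    have hcount : memberCount (rotUp q).2 0 = d := by
      rw [memberCount, filter_true_of_mem, rotUp, card_image_of_injOn hinj, hcard]
      intro S hS
      obtain ⟨T, -, rfl⟩ := mem_image.mp hS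
      exact mem_insert_self 0 _
    rw [hperm, hcount, h0, Fin.val_last]
  · obtain ⟨i, rfl⟩ := (finRotate (m + 1)).surjective j
    have hi : i ≠ Fin.last m := fun h => hj (h ▸ finRotate_last)
    have hρi : q.1 i ≠ 0 := fun h => hi (q.1.injective (h.trans hρ.symm))
    have hperm : ((rotUp q).1 (finRotate _ i) : ℕ) = q.1 i - 1 := by
      simp only [rotUp, Perm.mul_apply, Perm.inv_def, Equiv.symm_apply_apply]
      exact coe_finRotate_symm_of_ne_zero hρi
    have hcount : memberCount (rotUp q).2 (finRotate _ i) = memberCount q.2 i :=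
      memberCount_image hinj fun T _ => by
        simp only [mem_shiftUp, hj, Equiv.symm_apply_apply, false_or]
    have := Fin.val_ne_zero_iff.mpr hρi
    have := hcond i
    have := hshift i hi
    rw [hperm, hcount]
    omega

lemma rotUp_rotDown (h0 : e 0 = m + d) (hp : p ∈ coeffPairs (m + 1) d r e) :
    rotUp (rotDown p) = p := by
  obtain ⟨-, hzero⟩ := eq_last_and_zero_mem_of_mem_coeffPairs h0 hp
  refine Prod.ext (by simp only [rotUp, rotDown]; group) ?_
  rw [rotUp, rotDown, image_image]
  exact (image_congr fun S hS => shiftUp_shiftDown (hzero S hS)).trans image_id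

lemma rotDown_rotUp (hlast : e (Fin.last m) = 0)
    (hq : q ∈ coeffPairs (m + 1) d r e) :
    rotDown (rotUp q) = q := by
  obtain ⟨-, hnotMem⟩ := eq_zero_and_last_notMem_of_mem_coeffPairs hlast hq
  refine Prod.ext (by simp only [rotUp, rotDown]; group) ?_
  rw [rotUp, rotDown, image_image]
  exact (image_congr fun T hT => shiftDown_shiftUp (hnotMem T hT)).trans image_id

lemma sign_mul_rotDown (σ : Perm (Fin (m + 1)))
    (p : Perm (Fin (m + 1)) × Finset (Finset (Fin (m + 1)))) :
    Perm.sign (σ * (rotDown p).1) = Perm.sign (σ * p.1) := by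
  simp only [rotDown, map_mul]
  rw [mul_right_comm _ (Perm.sign p.1), Int.units_mul_self, one_mul]

theorem sum_sign_coeffPairs_succ_eq (h0 : e 0 = m + d) (hlast : e' (Fin.last m) = 0)
    (hshift : ∀ j ≠ Fin.last m, e' j = e (finRotate _ j) + 1) :
    ∑ p ∈ coeffPairs (m + 1) d (r + 1) e, ((Perm.sign (Fin.revPerm * p.1) : ℤˣ) : ℤ)
      = ∑ q ∈ coeffPairs (m + 1) d r e', ((Perm.sign (Fin.revPerm * q.1) : ℤˣ) : ℤ) :=
  sum_nbij' rotDown rotUp (fun _ hp => rotDown_mem_coeffPairs h0 hlast hshift hp)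
    (fun _ hq => rotUp_mem_coeffPairs h0 hlast hshift hq) (fun _ hp => rotUp_rotDown h0 hp)
    (fun _ hq => rotDown_rotUp hlast hq) fun p _ => by rw [sign_mul_rotDown]

end Rotation

theorem reduction_lemma_wedge_general (d k n : ℕ) (hk : 1 ≤ k)
    (lam : ℕ → ℕ)
    (hfirst : lam 0 = d) (hsupp : ∀ i : ℕ, n ≤ i → lam i = 0) :
    coeffOf (fun j : Fin n => lam (j : ℕ) + (n - 1 - (j : ℕ)))
        (vand n * charEE n d k)
      = coeffOf (fun j : Fin n => lam ((j : ℕ) + 1) + (n - 1 - (j : ℕ)))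
          (vand n * charEE n d (k - 1)) := by
  obtain ⟨r, rfl⟩ : ∃ r, k = r + 1 := ⟨k - 1, by omega⟩
  obtain _ | m := n
  · obtain rfl : d = 0 := hfirst.symm.trans (hsupp 0 le_rfl)
    simp only [charEE, eSum, powersetCard_zero, sum_singleton, prod_empty]
    exact congrArg₂ coeffOf (Subsingleton.elim _ _) rfl
  rw [coeffOf_vand_mul_charEE, coeffOf_vand_mul_charEE, Nat.add_sub_cancel]
  refine sum_sign_coeffPairs_succ_eq ?_ ?_ fun j hj => ?_
  · simp only [Fin.val_zero, hfirst]
    omega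
  · simp only [Fin.val_last, hsupp (m + 1) le_rfl]
    omega
  · have := Fin.val_lt_last hj
    simp only [coe_finRotate_of_ne_last hj]
    omega

/-- Reduction Lemma: if `λ ⊢ dk` has exactly `d` columns and `λ'` is `λ` with its first
row removed, then the multiplicity of `S^λ` in `Λ^d(Λ^k W)` equals the multiplicity of
`S^{λ'}` in `Λ^d(Λ^{k−1} W)`. -/
theorem reduction_lemma_wedge (d k n : ℕ) (hd : 1 ≤ d) (hk : 1 ≤ k) (hn : d * k ≤ n)
    (lam : ℕ → ℕ) (hanti : ∀ i j : ℕ, i ≤ j → lam j ≤ lam i)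
    (hfirst : lam 0 = d) (hsupp : ∀ i : ℕ, n ≤ i → lam i = 0)
    (hsum : ∑ i ∈ Finset.range n, lam i = d * k) :
    coeffOf (fun j : Fin n => lam (j : ℕ) + (n - 1 - (j : ℕ)))
        (vand n * charEE n d k)
      = coeffOf (fun j : Fin n => lam ((j : ℕ) + 1) + (n - 1 - (j : ℕ)))
          (vand n * charEE n d (k - 1)) :=
  reduction_lemma_wedge_general d k n hk lam hfirst hsupp
end
end
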